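/- arXiv:1706.05248 — 6 statements merged into one kernel-verified Lean document; each statement's English description precedes it below -/
import Mathlib

section
/- For every k ≥ 1, every [1,2]-set of the spider tree T_k has cardinality at least k + 1. -/
/-- Boolean adjacency of the spider tree `T_k`: root `none`, and branch
vertices `some (i, 0) = a_i`, `some (i, 1) = b_i`, `some (i, 2) = c_i`,
with edges `r–a_i`, `a_i–b_i`, `b_i–c_i`. -/
def spiderAdj (k : ℕ) : Option (Fin k × Fin 3) → Option (Fin k × Fin 3) → Bool
  | none, some (_, j) => decide (j = 0)
  | some (_, j), none => decide (j = 0)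
  | some (i, j), some (i', j') =>
      decide (i = i') && (decide ((j : ℕ) + 1 = (j' : ℕ)) || decide ((j' : ℕ) + 1 = (j : ℕ)))
  | none, none => false

/-- The spider tree `T_k` on `3k+1` vertices. -/
def spider (k : ℕ) : SimpleGraph (Option (Fin k × Fin 3)) where
  Adj x y := spiderAdj k x y = true
  symm := by
    constructor
    rintro (_ | ⟨i, j⟩) (_ | ⟨i', j'⟩) h <;> simp [spiderAdj] at h ⊢
    · exact h
    · exact h
    · exact ⟨h.1.symm, h.2.symm⟩
  loopless := by
    constructor
    rintro (_ | ⟨i, j⟩) h <;> simp [spiderAdj] at h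

instance (k : ℕ) : DecidableRel (spider k).Adj :=
  fun x y => inferInstanceAs (Decidable (spiderAdj k x y = true))

/-- `S` is a `[1,2]`-set of `G`: every vertex outside `S` has at least one and
at most two neighbors in `S`. -/
def IsOneTwoSet {V : Type*} [Fintype V] [DecidableEq V] (G : SimpleGraph V)
    [DecidableRel G.Adj] (S : Finset V) : Prop :=
  ∀ v, v ∉ S → 1 ≤ (G.neighborFinset v ∩ S).card ∧ (G.neighborFinset v ∩ S).card ≤ 2

/-! A `[1,2]`-set of `T_k` meets every branch in `b_i` or `c_i`, since `c_i` is a leaf hanging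
at `b_i`, and it contains the root or some `a_i`, since otherwise the root has no neighbour in it.
Choosing such vertices gives an injection of `k + 1` indices into the set. -/

theorem IsOneTwoSet.exists_adj_mem {V : Type*} [Fintype V] [DecidableEq V]
    {G : SimpleGraph V} [DecidableRel G.Adj] {S : Finset V} (hS : IsOneTwoSet G S)
    {v : V} (hv : v ∉ S) : ∃ w ∈ S, G.Adj v w := by
  obtain ⟨w, hw⟩ := Finset.card_pos.mp (hS v hv).1
  rw [Finset.mem_inter, SimpleGraph.mem_neighborFinset] at hw
  exact ⟨w, hw.2, hw.1⟩

namespace spider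

variable {k : ℕ}

theorem adj_leaf_iff (i : Fin k) (v : Option (Fin k × Fin 3)) :
    (spider k).Adj (some (i, 2)) v ↔ v = some (i, 1) := by
  rcases v with _ | ⟨i', j'⟩ <;> simp [spider, spiderAdj]
  omega

theorem adj_root_iff (v : Option (Fin k × Fin 3)) :
    (spider k).Adj none v ↔ ∃ i, v = some (i, 0) := by
  rcases v with _ | ⟨i', j'⟩ <;> simp [spider, spiderAdj]

end spider

namespace IsOneTwoSet

variable {k : ℕ} {S : Finset (Option (Fin k × Fin 3))}

theorem spider_exists_mem_branch (hS : IsOneTwoSet (spider k) S) (i : Fin k) :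
    ∃ j : Fin 3, j ≠ 0 ∧ some (i, j) ∈ S := by
  by_cases hc : some (i, 2) ∈ S
  · exact ⟨2, by decide, hc⟩
  · obtain ⟨w, hwS, hw⟩ := hS.exists_adj_mem hc
    rw [spider.adj_leaf_iff] at hw
    exact ⟨1, by decide, hw ▸ hwS⟩

theorem spider_exists_mem_level_zero (hS : IsOneTwoSet (spider k) S) :
    ∃ v ∈ S, ∀ p ∈ v, p.2 = 0 := by
  by_cases hr : none ∈ S
  · exact ⟨none, hr, by simp⟩
  · obtain ⟨w, hwS, hw⟩ := hS.exists_adj_mem hr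
    obtain ⟨i, rfl⟩ := (spider.adj_root_iff w).mp hw
    exact ⟨_, hwS, by simp⟩

end IsOneTwoSet

theorem spider_oneTwoSet_card_ge_general (k : ℕ)
    (S : Finset (Option (Fin k × Fin 3))) (hS : IsOneTwoSet (spider k) S) :
    k + 1 ≤ S.card := by
  choose j hj0 hjS using hS.spider_exists_mem_branch
  obtain ⟨v₀, hv₀S, hv₀⟩ := hS.spider_exists_mem_level_zero
  let f : Option (Fin k) → Option (Fin k × Fin 3) := fun t => t.elim v₀ fun i => some (i, j i)
  have hf : Function.Injective f := by
    rintro (_ | i) (_ | i') h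
    · rfl
    · exact absurd (hv₀ _ h) (hj0 i')
    · exact absurd (hv₀ _ h.symm) (hj0 i)
    · simp only [f, Option.elim, Option.some.injEq, Prod.mk.injEq] at h
      rw [h.1]
  calc k + 1 = (Finset.univ : Finset (Option (Fin k))).card := by simp
    _ ≤ S.card := Finset.card_le_card_of_injOn f
        (by rintro (_ | i) - <;> simp [f, hv₀S, hjS]) hf.injOn

theorem spider_oneTwoSet_card_ge (k : ℕ) (hk : 1 ≤ k)
    (S : Finset (Option (Fin k × Fin 3))) (hS : IsOneTwoSet (spider k) S) :
    k + 1 ≤ S.card :=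
  spider_oneTwoSet_card_ge_general k S hS
end

section
/- For every k ≥ 1, the minimum cardinality of a [1,2]-set of the spider tree T_k equals k + 1, i.e. γ_{[1,2]}(T_k) = k + 1. -/
/-! The root `r` together with all the middle vertices `b_i` is a `[1,2]`-set of size `k + 1`:
each `a_i` sees `r` and `b_i`, each `c_i` sees `b_i`. Conversely, a `[1,2]`-set dominates, so it
meets every closed neighbourhood, and the closed neighbourhoods of `r, c_1, …, c_k` are pairwise
disjoint. -/

open Function

namespace SimpleGraph

theorem card_le_card_of_pairwise_disjoint_closedNbhd {V ι : Type*} [Fintype ι] (G : SimpleGraph V)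
    {S : Finset V} (hS : ∀ v, ∃ w ∈ S, w ∈ insert v (G.neighborSet v)) (p : ι → V)
    (hp : Pairwise (Disjoint on fun i => insert (p i) (G.neighborSet (p i)))) :
    Fintype.card ι ≤ S.card := by
  choose f hfS hf using fun i => hS (p i)
  have hinj : Injective fun i => (⟨f i, hfS i⟩ : S) := by
    intro i j hij
    by_contra hne
    have hfij : f i = f j := congrArg Subtype.val hij
    exact Set.disjoint_left.mp (hp hne) (hf i) (hfij ▸ hf j)
  simpa using Fintype.card_le_of_injective _ hinj

end SimpleGraph

theorem IsOneTwoSet.exists_mem_closedNbhd {V : Type*} [Fintype V] [DecidableEq V]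
    {G : SimpleGraph V} [DecidableRel G.Adj] {S : Finset V} (hS : IsOneTwoSet G S) (v : V) :
    ∃ w ∈ S, w ∈ insert v (G.neighborSet v) := by
  by_cases hv : v ∈ S
  · exact ⟨v, hv, Set.mem_insert v _⟩
  · obtain ⟨w, hw⟩ := Finset.card_pos.mp (hS v hv).1
    rw [Finset.mem_inter, SimpleGraph.mem_neighborFinset] at hw
    exact ⟨w, hw.2, Set.mem_insert_of_mem v hw.1⟩

namespace Spider

variable {k : ℕ}

theorem adj_iff {x y : Option (Fin k × Fin 3)} : (spider k).Adj x y ↔ spiderAdj k x y := Iff.rfl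

theorem neighborFinset_leg_zero (i : Fin k) :
    (spider k).neighborFinset (some (i, 0)) = {none, some (i, 1)} := by
  ext x
  rcases x with _ | ⟨i', j'⟩ <;>
    simp [adj_iff, spiderAdj, Prod.ext_iff, Fin.ext_iff, -Fin.val_eq_zero_iff]
  omega

theorem neighborFinset_leg_two (i : Fin k) :
    (spider k).neighborFinset (some (i, 2)) = {some (i, 1)} := by
  ext x
  rcases x with _ | ⟨i', j'⟩ <;>
    simp [adj_iff, spiderAdj, Prod.ext_iff, Fin.ext_iff]
  omega

theorem pairwise_disjoint_closedNbhd :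
    Pairwise (Disjoint on fun i : Option (Fin k) =>
      insert (i.map (·, 2)) ((spider k).neighborSet (i.map (·, 2)))) := by
  rintro (_ | i) (_ | i') hne <;> rw [onFun, Set.disjoint_left] <;>
    rintro (_ | ⟨i'', j⟩) hx hy <;>
    simp [adj_iff, spiderAdj, Fin.ext_iff, -Fin.val_eq_zero_iff] at hne hx hy <;>
    omega

def rootAndMiddles (k : ℕ) : Finset (Option (Fin k × Fin 3)) :=
  insert none (Finset.univ.image fun i => some (i, 1))

theorem card_rootAndMiddles : (rootAndMiddles k).card = k + 1 := by
  rw [rootAndMiddles, Finset.card_insert_of_notMem (by simp),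
    Finset.card_image_of_injective _ fun i j h => by simpa using h, Finset.card_univ,
    Fintype.card_fin]

theorem isOneTwoSet_rootAndMiddles : IsOneTwoSet (spider k) (rootAndMiddles k) := by
  rintro (_ | ⟨i, j⟩) hv
  · simp [rootAndMiddles] at hv
  match j with
  | 0 =>
    rw [neighborFinset_leg_zero, Finset.inter_eq_left.mpr (by simp [rootAndMiddles])]
    simp
  | 1 => simp [rootAndMiddles] at hv
  | 2 =>
    rw [neighborFinset_leg_two, Finset.inter_eq_left.mpr (by simp [rootAndMiddles])]
    simp

end Spider

theorem spider_gamma_oneTwo_eq_general (k : ℕ) :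
    IsLeast {n : ℕ | ∃ S : Finset (Option (Fin k × Fin 3)),
      IsOneTwoSet (spider k) S ∧ S.card = n} (k + 1) := by
  refine ⟨⟨_, Spider.isOneTwoSet_rootAndMiddles, Spider.card_rootAndMiddles⟩, ?_⟩
  rintro _ ⟨S, hS, rfl⟩
  simpa using (spider k).card_le_card_of_pairwise_disjoint_closedNbhd hS.exists_mem_closedNbhd _
    Spider.pairwise_disjoint_closedNbhd

theorem spider_gamma_oneTwo_eq (k : ℕ) (hk : 1 ≤ k) :
    IsLeast {n : ℕ | ∃ S : Finset (Option (Fin k × Fin 3)),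
      IsOneTwoSet (spider k) S ∧ S.card = n} (k + 1) :=
  spider_gamma_oneTwo_eq_general k
end

section
/- For every k ≥ 1 and every function f : Fin k → Bool, the set S_f = {r} ∪ {b_i : f(i) = true} ∪ {c_i : f(i) = false} is a [1,2]-set of the spider tree T_k of cardinality k + 1, and the map f ↦ S_f is injective. -/
/-- The set `S_f = {r} ∪ {b_i : f i = true} ∪ {c_i : f i = false}`. -/
def Sf (k : ℕ) (f : Fin k → Bool) : Finset (Option (Fin k × Fin 3)) :=
  insert none
    (Finset.image
      (fun i : Fin k => if f i then some (i, (1 : Fin 3)) else some (i, (2 : Fin 3)))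
      Finset.univ)

/-! The root lies in `S_f` and every other vertex of the spider has degree at most two, so it
suffices that each vertex outside `S_f` has a neighbour in `S_f`: `a_i` is adjacent to the root,
and of the adjacent pair `b_i`, `c_i` exactly one lies in `S_f`. Since `f i` is recorded by whether
`b_i ∈ S_f`, the map `f ↦ S_f` is injective. -/

theorem SimpleGraph.isOneTwoSet_of_forall_notMem {V : Type*} [Fintype V] [DecidableEq V]
    (G : SimpleGraph V) [DecidableRel G.Adj] (S : Finset V)
    (h : ∀ v, v ∉ S → G.degree v ≤ 2 ∧ ∃ u ∈ S, G.Adj v u) : IsOneTwoSet G S := by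
  intro v hv
  obtain ⟨hdeg, u, huS, hvu⟩ := h v hv
  refine ⟨Finset.card_pos.mpr ⟨u, by simpa using ⟨hvu, huS⟩⟩, ?_⟩
  exact (Finset.card_le_card Finset.inter_subset_left).trans hdeg

section Spider

variable {k : ℕ}

-- For `c_i` the vertex `some (i, 2 + 1) = a_i` is a harmless extra, as `Fin 3` wraps around.
theorem spider_neighborFinset_some_subset (i : Fin k) (j : Fin 3) :
    (spider k).neighborFinset (some (i, j)) ⊆
      {if j = 0 then none else some (i, j - 1), some (i, j + 1)} := by
  intro x hx
  rw [SimpleGraph.mem_neighborFinset] at hx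
  rcases x with _ | ⟨i', j'⟩ <;> fin_cases j <;> try fin_cases j'
  all_goals simp_all [spider, spiderAdj]

theorem spider_degree_some_le_two (x : Fin k × Fin 3) : (spider k).degree (some x) ≤ 2 := by
  rw [← SimpleGraph.card_neighborFinset_eq_degree]
  exact (Finset.card_le_card (spider_neighborFinset_some_subset x.1 x.2)).trans Finset.card_le_two

theorem spider_adj_some_zero_none (i : Fin k) : (spider k).Adj (some (i, 0)) none := rfl

theorem spider_adj_some_some {i : Fin k} {j j' : Fin 3} (hj : j ≠ 0) (hj' : j' ≠ 0)
    (hne : j ≠ j') : (spider k).Adj (some (i, j)) (some (i, j')) := by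
  fin_cases j <;> fin_cases j' <;> simp_all [spider, spiderAdj]

end Spider

section Sf

variable {k : ℕ} {f : Fin k → Bool}

theorem Sf_eq_insert_image :
    Sf k f = insert none (Finset.univ.image fun i => some (i, if f i then 1 else 2)) := by
  unfold Sf
  congr! 3 with i
  split <;> rfl

theorem none_mem_Sf : none ∈ Sf k f := Finset.mem_insert_self _ _

theorem some_mem_Sf_iff {i : Fin k} {j : Fin 3} :
    some (i, j) ∈ Sf k f ↔ j = if f i then 1 else 2 := by
  simp only [Sf_eq_insert_image, Finset.mem_insert, reduceCtorEq, Finset.mem_image,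
    Finset.mem_univ, Option.some.injEq, Prod.mk.injEq, true_and, exists_eq_left, false_or]
  exact eq_comm

theorem some_one_mem_Sf_iff {i : Fin k} : some (i, 1) ∈ Sf k f ↔ f i = true := by
  rw [some_mem_Sf_iff]
  cases f i <;> decide

theorem card_Sf (f : Fin k → Bool) : (Sf k f).card = k + 1 := by
  rw [Sf_eq_insert_image, Finset.card_insert_of_notMem (by simp),
    Finset.card_image_of_injective _ fun a b h => by simpa using congrArg (Option.map Prod.fst) h]
  simp

theorem Sf_injective (k : ℕ) : Function.Injective (Sf k) := fun f g h =>
  funext fun i => Bool.eq_iff_iff.mpr <| by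
    rw [← some_one_mem_Sf_iff, h, some_one_mem_Sf_iff]

theorem exists_spider_adj_mem_Sf {v : Option (Fin k × Fin 3)} (hv : v ∉ Sf k f) :
    ∃ u ∈ Sf k f, (spider k).Adj v u := by
  rcases v with _ | ⟨i, j⟩
  · exact absurd none_mem_Sf hv
  by_cases hj : j = 0
  · subst hj
    exact ⟨none, none_mem_Sf, spider_adj_some_zero_none i⟩
  · refine ⟨some (i, if f i then 1 else 2), some_mem_Sf_iff.mpr rfl, spider_adj_some_some hj ?_ ?_⟩
    · split <;> decide
    · rwa [some_mem_Sf_iff] at hv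

end Sf

theorem spider_Sf_isOneTwoSet_and_injective_general (k : ℕ) :
    (∀ f : Fin k → Bool, IsOneTwoSet (spider k) (Sf k f) ∧ (Sf k f).card = k + 1) ∧
    Function.Injective (Sf k) := by
  refine ⟨fun f => ⟨?_, card_Sf f⟩, Sf_injective k⟩
  refine (spider k).isOneTwoSet_of_forall_notMem _ fun v hv => ⟨?_, exists_spider_adj_mem_Sf hv⟩
  rcases v with _ | x
  · exact absurd none_mem_Sf hv
  · exact spider_degree_some_le_two x

theorem spider_Sf_isOneTwoSet_and_injective (k : ℕ) (hk : 1 ≤ k) :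
    (∀ f : Fin k → Bool, IsOneTwoSet (spider k) (Sf k f) ∧ (Sf k f).card = k + 1) ∧
    Function.Injective (Sf k) :=
  spider_Sf_isOneTwoSet_and_injective_general k
end

section
/- Not every tree has a total [1,2]-set: the subdivided star S(K_{1,3}), i.e. the tree on the 7 vertices {c, a_1, a_2, a_3, l_1, l_2, l_3} with edges c–a_i and a_i–l_i for i = 1,2,3, has no total [1,2]-set. -/
/-- `S` is a total `[1,2]`-set of `G`: every vertex of `G` (whether in `S` or
not) has at least one and at most two neighbors in `S`. -/
def IsTotalOneTwoSet {V : Type*} (G : SimpleGraph V) (S : Set V) : Prop :=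
  ∀ v : V, 1 ≤ (G.neighborSet v ∩ S).ncard ∧ (G.neighborSet v ∩ S).ncard ≤ 2

/-- The subdivided star `S(K_{1,3})`: center `0`, support vertices `1,2,3`,
leaves `4,5,6`, with edges `0–1, 0–2, 0–3, 1–4, 2–5, 3–6`. -/
def subdividedStarEdges : List (Fin 7 × Fin 7) := [(0, 1), (0, 2), (0, 3), (1, 4), (2, 5), (3, 6)]

def subdividedStar : SimpleGraph (Fin 7) where
  Adj x y := (x, y) ∈ subdividedStarEdges ∨ (y, x) ∈ subdividedStarEdges
  symm := ⟨fun _ _ h => h.symm⟩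
  loopless := ⟨fun x h => by revert h; fin_cases x <;> decide⟩

/-! A vertex whose neighbourhood is a single vertex `a` forces `a` into every total `[1,2]`-set, so
every total `[1,2]`-set contains the three support vertices `1, 2, 3`. They are all neighbours of
the centre `0`, which therefore has three neighbours in the set. -/

namespace IsTotalOneTwoSet

variable {V : Type*} {G : SimpleGraph V} {S : Set V}

theorem mem_of_neighborSet_eq_singleton (hS : IsTotalOneTwoSet G S) {l a : V}
    (hl : G.neighborSet l = {a}) : a ∈ S := by
  obtain ⟨x, hxl, hxS⟩ := Set.nonempty_of_ncard_ne_zero (Nat.one_le_iff_ne_zero.mp (hS l).1)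
  obtain rfl : x = a := by rwa [hl] at hxl
  exact hxS

theorem ncard_le_two_of_subset_neighborSet (hS : IsTotalOneTwoSet G S) {v : V} {T : Set V}
    (hT : T ⊆ G.neighborSet v) (hsupp : ∀ a ∈ T, ∃ l, G.neighborSet l = {a}) : T.ncard ≤ 2 := by
  have hfin : (G.neighborSet v ∩ S).Finite := Set.finite_of_ncard_pos (hS v).1
  have hTS : T ⊆ G.neighborSet v ∩ S := fun a ha =>
    ⟨hT ha, let ⟨_, hl⟩ := hsupp a ha; hS.mem_of_neighborSet_eq_singleton hl⟩
  exact (Set.ncard_le_ncard hTS hfin).trans (hS v).2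

end IsTotalOneTwoSet

theorem subdividedStar_neighborSet_zero : subdividedStar.neighborSet 0 = {1, 2, 3} := by
  ext y; fin_cases y <;> simp [SimpleGraph.neighborSet, subdividedStar, subdividedStarEdges]

theorem subdividedStar_neighborSet_leaf (a : Fin 7) (ha : a ∈ ({1, 2, 3} : Set (Fin 7))) :
    subdividedStar.neighborSet (a + 3) = {a} := by
  rcases ha with rfl | rfl | rfl <;>
    ext y <;> fin_cases y <;> simp [SimpleGraph.neighborSet, subdividedStar, subdividedStarEdges]

theorem subdividedStar_no_totalOneTwoSet :
    ¬ ∃ S : Set (Fin 7), IsTotalOneTwoSet subdividedStar S := by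
  rintro ⟨S, hS⟩
  have hle := hS.ncard_le_two_of_subset_neighborSet subdividedStar_neighborSet_zero.symm.subset
    fun a ha => ⟨a + 3, subdividedStar_neighborSet_leaf a ha⟩
  have hthree : ({1, 2, 3} : Set (Fin 7)).ncard = 3 :=
    Set.ncard_eq_three.mpr ⟨1, 2, 3, by decide, by decide, by decide, rfl⟩
  omega
end

section
/- (Rule 1) Let T be a finite tree on vertex set V, let S be a total [1,2]-set of T, and let v ∈ S. Form the graph T₁ on V ⊕ Unit by keeping all edges of T (on the left summand) and adding the single edge between (inl v) and the new vertex (inr ()). Then T₁ is a tree and the image of S under inl is a total [1,2]-set of T₁. -/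
/-- The graph obtained from `T` by adding one new vertex `Sum.inr ()` joined
to `v` by a single edge. -/
def addLeaf {V : Type*} (T : SimpleGraph V) (v : V) : SimpleGraph (V ⊕ Unit) :=
  T.map Sum.inl ⊔
    SimpleGraph.fromEdgeSet {s(Sum.inl v, Sum.inr ())}

open SimpleGraph Sum

namespace SimpleGraph

theorem IsAcyclic.map {V W : Type*} {G : SimpleGraph V} {f : V → W} (hf : f.Injective)
    (hG : G.IsAcyclic) : (G.map f).IsAcyclic := by
  let e : V ↪ W := ⟨f, hf⟩
  intro x c hc
  -- a cycle has no isolated vertices, so it stays inside the copy `range f` of `G`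
  have hrange : ∀ y ∈ c.support, y ∈ Set.range f := fun y hy ↦
    Set.image_subset_range f G.support <|
      support_map e G ▸ mem_support_of_mem_walk_support c hc.not_nil hy
  have hcyc : (c.induce _ hrange).IsCycle := .of_map (Walk.map_induce c hrange ▸ hc)
  exact (Embedding.map e G).isoInduceRange.isAcyclic_iff.mp hG _ hcyc

variable {V : Type*} {T : SimpleGraph V} {v : V}

@[simp] theorem addLeaf_adj_inl_inl {a b : V} :
    (addLeaf T v).Adj (inl a) (inl b) ↔ T.Adj a b := by
  simpa [addLeaf, map_adj'] using fun h : T.Adj a b ↦ h.ne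

@[simp] theorem addLeaf_adj_inl_inr {a : V} : (addLeaf T v).Adj (inl a) (inr ()) ↔ a = v := by
  simp [addLeaf, map_adj']

@[simp] theorem addLeaf_adj_inr_inl {a : V} : (addLeaf T v).Adj (inr ()) (inl a) ↔ a = v := by
  simp [addLeaf, map_adj']

theorem Connected.addLeaf (hT : T.Connected) : (addLeaf T v).Connected := by
  refine (connected_iff_exists_forall_reachable _).mpr ⟨inl v, ?_⟩
  rintro (u | ⟨⟩)
  · exact (hT.preconnected v u).map ⟨inl, addLeaf_adj_inl_inl.mpr⟩
  · exact (addLeaf_adj_inl_inr.mpr rfl).reachable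

theorem IsAcyclic.addLeaf (hT : T.IsAcyclic) : (addLeaf T v).IsAcyclic := by
  have hisolated : inr () ∉ (T.map inl).support := by
    simp [IsIsolated, map_adj']
  exact (hT.map inl_injective).sup_edge_of_not_reachable
    fun h ↦ hisolated (mem_support_of_reachable inr_ne_inl h.symm)

theorem IsTree.addLeaf (hT : T.IsTree) : (addLeaf T v).IsTree :=
  ⟨hT.connected.addLeaf, hT.isAcyclic.addLeaf⟩

theorem addLeaf_neighborSet_inl_inter_image (S : Set V) (u : V) :
    (addLeaf T v).neighborSet (inl u) ∩ inl '' S = inl '' (T.neighborSet u ∩ S) := by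
  ext (w | ⟨⟩) <;> simp

theorem addLeaf_neighborSet_inr : (addLeaf T v).neighborSet (inr ()) = {inl v} := by
  ext (w | ⟨⟩) <;> simp

end SimpleGraph

theorem rule1_addLeaf_totalOneTwoSet_general {V : Type*}
    (T : SimpleGraph V) (hT : T.IsTree)
    (S : Set V) (hS : IsTotalOneTwoSet T S) (v : V) (hv : v ∈ S) :
    (addLeaf T v).IsTree ∧ IsTotalOneTwoSet (addLeaf T v) (Sum.inl '' S) := by
  refine ⟨hT.addLeaf, ?_⟩
  rintro (u | ⟨⟩)
  · rw [addLeaf_neighborSet_inl_inter_image, Set.ncard_image_of_injective _ inl_injective]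
    exact hS u
  · rw [addLeaf_neighborSet_inr, Set.singleton_inter_of_mem (Set.mem_image_of_mem inl hv),
      Set.ncard_singleton]
    exact ⟨le_rfl, one_le_two⟩

theorem rule1_addLeaf_totalOneTwoSet {V : Type*} [Fintype V]
    (T : SimpleGraph V) (hT : T.IsTree)
    (S : Set V) (hS : IsTotalOneTwoSet T S) (v : V) (hv : v ∈ S) :
    (addLeaf T v).IsTree ∧ IsTotalOneTwoSet (addLeaf T v) (Sum.inl '' S) :=
  rule1_addLeaf_totalOneTwoSet_general T hT S hS v hv
end

section
/- (Rule 3, two-vertex case) Let T be a finite tree on vertex set V, let S be a total [1,2]-set of T, and let u ∈ V \ S be a vertex with exactly one neighbor in S. Form the graph T₃ on V ⊕ Fin 2 by keeping all edges of T (on the left summand) and adding the path u–v–w, where v = inr 0 and w = inr 1 are new vertices (i.e. add edges {inl u, inr 0} and {inr 0, inr 1}). Then T₃ is a tree and (inl '' S) ∪ {v, w} is a total [1,2]-set of T₃. -/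
/-- The graph obtained from `T` by attaching a new path `u – inr 0 – inr 1`
of two new vertices at `u`. -/
def addPath2 {V : Type*} (T : SimpleGraph V) (u : V) : SimpleGraph (V ⊕ Fin 2) :=
  T.map (⟨Sum.inl, Sum.inl_injective⟩ : V ↪ V ⊕ Fin 2) ⊔
    SimpleGraph.fromEdgeSet
      {s(Sum.inl u, Sum.inr 0), s(Sum.inr 0, Sum.inr 1)}

open SimpleGraph Sum

section

variable {V : Type*} (T : SimpleGraph V) (u : V)

@[simp]
lemma addPath2_adj_inl_inl (a b : V) : (addPath2 T u).Adj (inl a) (inl b) ↔ T.Adj a b := by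
  rw [addPath2, sup_adj, SimpleGraph.map_adj]
  simp [fromEdgeSet_adj]

@[simp]
lemma addPath2_adj_inl_inr (a : V) (i : Fin 2) :
    (addPath2 T u).Adj (inl a) (inr i) ↔ a = u ∧ i = 0 := by
  rw [addPath2, sup_adj, SimpleGraph.map_adj]
  simp [fromEdgeSet_adj]

@[simp]
lemma addPath2_adj_inr_inl (i : Fin 2) (a : V) :
    (addPath2 T u).Adj (inr i) (inl a) ↔ a = u ∧ i = 0 := by
  rw [adj_comm, addPath2_adj_inl_inr]

@[simp]
lemma addPath2_adj_inr_inr (i j : Fin 2) : (addPath2 T u).Adj (inr i) (inr j) ↔ i ≠ j := by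
  rw [addPath2, sup_adj, SimpleGraph.map_adj]
  fin_cases i <;> fin_cases j <;> simp [fromEdgeSet_adj]

lemma connected_addPath2 {T : SimpleGraph V} (hT : T.Connected) (u : V) :
    (addPath2 T u).Connected := by
  have h0 : (addPath2 T u).Reachable (inl u) (inr 0) := Adj.reachable (by simp)
  refine (connected_iff_exists_forall_reachable _).2 ⟨inl u, ?_⟩
  rintro (x | i)
  · exact (hT.preconnected u x).map ⟨inl, (addPath2_adj_inl_inl T u _ _).2⟩
  · fin_cases i
    · exact h0
    · exact h0.trans (Adj.reachable (by simp))

lemma edgeSet_addPath2 :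
    (addPath2 T u).edgeSet = Sym2.map inl '' T.edgeSet ∪ {s(inl u, inr 0), s(inr 0, inr 1)} := by
  rw [addPath2, edgeSet_sup, edgeSet_map, edgeSet_fromEdgeSet, sdiff_eq_left.2]
  · rfl
  · simp [Set.disjoint_left]

lemma ncard_edgeSet_addPath2 [Finite V] :
    (addPath2 T u).edgeSet.ncard = T.edgeSet.ncard + 2 := by
  rw [edgeSet_addPath2, Set.ncard_union_eq, Set.ncard_image_of_injective _
    (Sym2.map.injective inl_injective), Set.ncard_pair (by simp)]
  rw [Set.disjoint_left]
  rintro _ ⟨e, -, rfl⟩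
  induction e using Sym2.ind
  simp

lemma isTree_addPath2 [Finite V] {T : SimpleGraph V} (hT : T.IsTree) (u : V) :
    (addPath2 T u).IsTree := by
  rw [isTree_iff_connected_and_card] at hT ⊢
  refine ⟨connected_addPath2 hT.1 u, ?_⟩
  rw [Nat.card_coe_set_eq, ncard_edgeSet_addPath2, Nat.card_sum, Nat.card_fin, ← hT.2,
    Nat.card_coe_set_eq]

open Classical in
lemma ncard_addPath2_neighborSet_inl_inter [Finite V] (S : Set V) (x : V) :
    ((addPath2 T u).neighborSet (inl x) ∩ (inl '' S ∪ {inr 0, inr 1})).ncard =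
      (T.neighborSet x ∩ S).ncard + if x = u then 1 else 0 := by
  have hset : (addPath2 T u).neighborSet (inl x) ∩ (inl '' S ∪ {inr 0, inr 1}) =
      inl '' (T.neighborSet x ∩ S) ∪ if x = u then {inr 0} else ∅ := by
    ext (z | j) <;> split_ifs <;> simp [*]
    omega
  rw [hset, Set.ncard_union_eq (by split_ifs <;> simp),
    Set.ncard_image_of_injective _ inl_injective]
  split_ifs <;> simp

lemma addPath2_neighborSet_inr_inter {S : Set V} (huS : u ∉ S) (i : Fin 2) :
    (addPath2 T u).neighborSet (inr i) ∩ (inl '' S ∪ {inr 0, inr 1}) = {inr i.rev} := by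
  ext (z | j)
  · fin_cases i <;> simp
    exact fun h => h ▸ huS
  · fin_cases i <;> fin_cases j <;> simp

end

theorem rule3_addPath2_totalOneTwoSet {V : Type*} [Fintype V]
    (T : SimpleGraph V) (hT : T.IsTree)
    (S : Set V) (hS : IsTotalOneTwoSet T S)
    (u : V) (huS : u ∉ S) (hone : (T.neighborSet u ∩ S).ncard = 1) :
    (addPath2 T u).IsTree ∧
    IsTotalOneTwoSet (addPath2 T u)
      (Sum.inl '' S ∪ {Sum.inr 0, Sum.inr 1}) := by
  refine ⟨isTree_addPath2 hT u, ?_⟩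
  rintro (x | i)
  · rw [ncard_addPath2_neighborSet_inl_inter]
    have := hS x
    split_ifs with hxu
    · subst hxu
      omega
    · omega
  · rw [addPath2_neighborSet_inr_inter T u huS i, Set.ncard_singleton]
    simp
end
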